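/- arXiv:0906.1238 — 7 statements merged into one kernel-verified Lean document; each statement's English description precedes it below -/
import Mathlib

section
/- Let G be a finite weighted graph with symmetric nonnegative conductances c_{xy} whose skeleton is connected, and let x be a vertex with ∑_{w≠x} c_{xw} > 0. Define the reduced graph G_x on V \ {x} with conductances c̃_{yz} = c_{yz} + c_{xy}c_{xz}/∑_{w≠x} c_{xw}. Then the spectral gap of the random walk on G_x is at least the spectral gap of the random walk on G: λ₁^{RW}(G_x) ≥ λ₁^{RW}(G). -/
open Finset

/-- The random walk generator on a finite weighted graph. -/
def rwGen {V : Type*} [Fintype V] [DecidableEq V] (c : V → V → ℝ) (g : V → ℝ) (z : V) : ℝ :=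
  ∑ y ∈ univ.erase z, c z y * (g y - g z)

/-- `lam` is an eigenvalue of `-L` for the random walk with conductances `c`. -/
def rwEig {V : Type*} [Fintype V] [DecidableEq V] (c : V → V → ℝ) (lam : ℝ) : Prop :=
  ∃ g : V → ℝ, g ≠ 0 ∧ ∀ z, -(rwGen c g z) = lam * g z

/-!
Let `g` be an eigenfunction of the reduced network with eigenvalue `μ ≠ 0`, and extend it to `V`
by its harmonic value at `x`, the `c x ·`-weighted mean of `g`. Eliminating `x` is the Schur
complement of the Laplacian at `x`, so the extension `h` satisfies `-L h = μ g` off `x` and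
`-L h = 0` at `x`; hence `⟨h, -L h⟩ = μ ‖g‖²`. Summing `-L' g = μ g` gives `∑ g = 0`, so centering
`h` leaves it of norm at least `‖g‖²`, and the variational characterization of `λ₁` on mean-zero
functions yields `λ₁ ‖g‖² ≤ μ ‖g‖²`.
-/

open Matrix

namespace Matrix.IsHermitian

variable {n : Type*} [Fintype n] [DecidableEq n] {A : Matrix n n ℝ}

theorem mul_dotProduct_self_le_dotProduct_mulVec (hA : A.IsHermitian) {lam : ℝ}
    (hlam : ∀ μ ≠ 0, ∀ v ≠ 0, A *ᵥ v = μ • v → lam ≤ μ) {f : n → ℝ}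
    (hf : ∀ v, A *ᵥ v = 0 → v ⬝ᵥ f = 0) :
    lam * (f ⬝ᵥ f) ≤ f ⬝ᵥ (A *ᵥ f) := by
  set b := hA.eigenvectorBasis
  have hinner : ∀ u v : n → ℝ, inner ℝ (WithLp.toLp 2 u) (WithLp.toLp 2 v) = u ⬝ᵥ v := by
    intro u v
    simp [EuclideanSpace.inner_toLp_toLp, dotProduct_comm]
  have expand : ∀ u : n → ℝ, f ⬝ᵥ u = ∑ i, (b i ⬝ᵥ f) * (b i ⬝ᵥ u) := by
    intro u
    rw [← hinner, ← b.sum_inner_mul_inner]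
    congr! 1 with i
    rw [real_inner_comm, ← hinner, ← hinner]
  have hAb : ∀ i, b i ⬝ᵥ (A *ᵥ f) = hA.eigenvalues i * (b i ⬝ᵥ f) := by
    intro i
    rw [dotProduct_mulVec, ← mulVec_transpose, ← conjTranspose_eq_transpose_of_trivial, hA.eq,
      hA.mulVec_eigenvectorBasis, smul_dotProduct, smul_eq_mul]
  rw [expand, expand, mul_sum]
  refine sum_le_sum fun i _ => ?_
  rw [hAb]
  by_cases hμ : hA.eigenvalues i = 0
  · have hbf : b i ⬝ᵥ f = 0 := hf _ (by rw [hA.mulVec_eigenvectorBasis, hμ, zero_smul])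
    simp [hbf]
  · have hb : (b i : n → ℝ) ≠ 0 := fun h => b.orthonormal.ne_zero i (by ext j; exact congrFun h j)
    have := hlam _ hμ _ hb (hA.mulVec_eigenvectorBasis i)
    linarith [mul_le_mul_of_nonneg_right this (mul_self_nonneg (b i ⬝ᵥ f))]

end Matrix.IsHermitian

namespace Network

variable {V : Type*} [Fintype V] [DecidableEq V] {c : V → V → ℝ}

theorem rwGen_eq_sum (c : V → V → ℝ) (g : V → ℝ) (z : V) :
    rwGen c g z = ∑ y, c z y * (g y - g z) :=
  sum_erase _ (by rw [sub_self, mul_zero])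

/-- The matrix of `-L`; the self-conductances `c z z` cancel, as they do in `rwGen`. -/
def laplacian (c : V → V → ℝ) : Matrix V V ℝ :=
  diagonal (fun z => ∑ y, c z y) - of c

theorem laplacian_mulVec_apply (c : V → V → ℝ) (g : V → ℝ) (z : V) :
    (laplacian c *ᵥ g) z = ∑ y, c z y * (g z - g y) := by
  rw [laplacian, sub_mulVec, Pi.sub_apply, mulVec_diagonal, sum_mul, mulVec, dotProduct,
    ← sum_sub_distrib]
  simp only [of_apply, mul_sub]

theorem rwEig_iff (c : V → V → ℝ) (μ : ℝ) :
    rwEig c μ ↔ ∃ g ≠ 0, laplacian c *ᵥ g = μ • g := by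
  simp only [rwEig, funext_iff, laplacian_mulVec_apply, rwGen_eq_sum, ← sum_neg_distrib,
    Pi.smul_apply, smul_eq_mul, neg_mul_eq_mul_neg, neg_sub]

theorem laplacian_mulVec_const (c : V → V → ℝ) (a : ℝ) : laplacian c *ᵥ (fun _ => a) = 0 := by
  ext z
  simp [laplacian_mulVec_apply]

theorem isHermitian_laplacian (hsymm : ∀ y z, c y z = c z y) : (laplacian c).IsHermitian := by
  rw [isHermitian_iff_isSymm, IsSymm, laplacian, transpose_sub, diagonal_transpose]
  congr 1
  ext y z
  exact hsymm z y

theorem sum_laplacian_mulVec (hsymm : ∀ y z, c y z = c z y) (f : V → ℝ) :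
    ∑ z, (laplacian c *ᵥ f) z = 0 := by
  have h := dotProduct_mulVec (fun _ => (1 : ℝ)) (laplacian c) f
  rw [← mulVec_transpose, ← conjTranspose_eq_transpose_of_trivial,
    (isHermitian_laplacian hsymm).eq, laplacian_mulVec_const, zero_dotProduct] at h
  simpa [dotProduct] using h

theorem two_mul_dotProduct_laplacian_mulVec (hsymm : ∀ y z, c y z = c z y) (f : V → ℝ) :
    2 * (f ⬝ᵥ laplacian c *ᵥ f) = ∑ z, ∑ y, c z y * (f z - f y) ^ 2 := by
  have h : f ⬝ᵥ laplacian c *ᵥ f = ∑ z, ∑ y, c z y * f z * (f z - f y) := by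
    simp only [dotProduct, laplacian_mulVec_apply, mul_sum, mul_left_comm, mul_assoc]
  have h' : f ⬝ᵥ laplacian c *ᵥ f = ∑ z, ∑ y, c z y * f y * (f y - f z) := by
    rw [h, sum_comm]
    simp only [hsymm]
  rw [two_mul]
  nth_rw 1 [h]
  rw [h', ← sum_add_distrib]
  refine sum_congr rfl fun z _ => ?_
  rw [← sum_add_distrib]
  exact sum_congr rfl fun y _ => by ring

theorem dotProduct_laplacian_mulVec_nonneg (hsymm : ∀ y z, c y z = c z y)
    (hnonneg : ∀ y z, 0 ≤ c y z) (f : V → ℝ) : 0 ≤ f ⬝ᵥ laplacian c *ᵥ f := by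
  have h := two_mul_dotProduct_laplacian_mulVec hsymm f
  have : 0 ≤ ∑ z, ∑ y, c z y * (f z - f y) ^ 2 :=
    sum_nonneg fun z _ => sum_nonneg fun y _ => mul_nonneg (hnonneg z y) (sq_nonneg _)
  linarith

theorem eq_of_laplacian_mulVec_eq_zero (hsymm : ∀ y z, c y z = c z y)
    (hnonneg : ∀ y z, 0 ≤ c y z)
    (hconn : (SimpleGraph.fromRel (fun y z => 0 < c y z)).Connected) {f : V → ℝ}
    (hf : laplacian c *ᵥ f = 0) (y z : V) : f y = f z := by
  have hterm : ∀ y z, c y z * (f y - f z) ^ 2 = 0 := by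
    have h := two_mul_dotProduct_laplacian_mulVec hsymm f
    rw [hf, dotProduct_zero, mul_zero, eq_comm,
      sum_eq_zero_iff_of_nonneg fun z _ => sum_nonneg fun y _ =>
        mul_nonneg (hnonneg z y) (sq_nonneg _)] at h
    intro y z
    exact (sum_eq_zero_iff_of_nonneg fun w _ => mul_nonneg (hnonneg y w) (sq_nonneg _)).1
      (h y (mem_univ y)) z (mem_univ z)
  have hadj : ∀ {a b}, (SimpleGraph.fromRel (fun y z => 0 < c y z)).Adj a b → f a = f b := by
    intro a b hab
    have hpos : 0 < c a b := by
      rcases (SimpleGraph.fromRel_adj _ a b).1 hab with ⟨-, h | h⟩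
      exacts [h, hsymm b a ▸ h]
    simpa [hpos.ne', sub_eq_zero] using hterm a b
  obtain ⟨w⟩ := hconn.preconnected y z
  induction w with
  | nil => rfl
  | cons h _ ih => exact (hadj h).trans ih

theorem sum_eq_zero_of_laplacian_mulVec_eq_smul (hsymm : ∀ y z, c y z = c z y) {μ : ℝ}
    (hμ : μ ≠ 0) {g : V → ℝ} (hg : laplacian c *ᵥ g = μ • g) : ∑ z, g z = 0 := by
  have h := sum_laplacian_mulVec hsymm g
  simp only [hg, Pi.smul_apply, smul_eq_mul, ← mul_sum] at h
  exact (mul_eq_zero.1 h).resolve_left hμ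

theorem mul_sum_sq_sub_mean_le [Nonempty V] (hsymm : ∀ y z, c y z = c z y)
    (hnonneg : ∀ y z, 0 ≤ c y z)
    (hconn : (SimpleGraph.fromRel (fun y z => 0 < c y z)).Connected) {lam : ℝ}
    (hlam : ∀ μ, μ ≠ 0 → rwEig c μ → lam ≤ μ) (f : V → ℝ) :
    lam * ∑ z, (f z - (∑ y, f y) / Fintype.card V) ^ 2 ≤ f ⬝ᵥ laplacian c *ᵥ f := by
  set m := (∑ y, f y) / Fintype.card V
  set f₀ : V → ℝ := fun z => f z - m
  have hf₀ : laplacian c *ᵥ f₀ = laplacian c *ᵥ f := by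
    rw [show f₀ = f - fun _ => m from rfl, mulVec_sub, laplacian_mulVec_const, sub_zero]
  have hform : f ⬝ᵥ laplacian c *ᵥ f = f₀ ⬝ᵥ laplacian c *ᵥ f₀ := by
    rw [hf₀, show f₀ = f - fun _ => m from rfl, sub_dotProduct]
    simp [dotProduct, ← mul_sum, sum_laplacian_mulVec hsymm]
  have hsum : ∑ z, f₀ z = 0 := by
    have hcard : (Fintype.card V : ℝ) ≠ 0 := Nat.cast_ne_zero.2 Fintype.card_ne_zero
    simp only [f₀, m, sum_sub_distrib, sum_const, card_univ, nsmul_eq_mul, mul_div_cancel₀ _ hcard,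
      sub_self]
  have hker : ∀ v, laplacian c *ᵥ v = 0 → v ⬝ᵥ f₀ = 0 := by
    intro v hv
    obtain ⟨z₀⟩ := ‹Nonempty V›
    have hconst := eq_of_laplacian_mulVec_eq_zero hsymm hnonneg hconn hv
    simp [dotProduct, hconst _ z₀, ← mul_sum, hsum]
  have := (isHermitian_laplacian hsymm).mul_dotProduct_self_le_dotProduct_mulVec
    (fun μ hμ v hv hvμ => hlam μ hμ ((rwEig_iff c μ).2 ⟨v, hv, hvμ⟩)) hker
  have hsq : ∑ z, (f z - m) ^ 2 = f₀ ⬝ᵥ f₀ := by simp only [dotProduct, sq, f₀]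
  rwa [hsq, hform]

section Elimination

variable {x : V}

theorem sum_erase_eq_sum_subtype_ne {M : Type*} [AddCommMonoid M] (F : V → M) (x : V) :
    ∑ w ∈ univ.erase x, F w = ∑ w : {v : V // v ≠ x}, F w :=
  sum_subtype _ (fun _ => by simp) F

/-- Conductances after eliminating `x` (Kron reduction, or star-mesh transform). -/
noncomputable def kronReduction (c : V → V → ℝ) (x : V) (y z : {v : V // v ≠ x}) : ℝ :=
  c y z + c x y * c x z / ∑ w ∈ univ.erase x, c x w

noncomputable def harmonicExtension (c : V → V → ℝ) (x : V) (g : {v : V // v ≠ x} → ℝ)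
    (v : V) : ℝ :=
  if hv : v = x then (∑ w : {v : V // v ≠ x}, c x w * g w) / ∑ w ∈ univ.erase x, c x w
  else g ⟨v, hv⟩

theorem harmonicExtension_of_ne (g : {v : V // v ≠ x} → ℝ) (y : {v : V // v ≠ x}) :
    harmonicExtension c x g y = g y :=
  dif_neg y.2

theorem kronReduction_symm (hsymm : ∀ y z, c y z = c z y) (y z : {v : V // v ≠ x}) :
    kronReduction c x y z = kronReduction c x z y := by
  simp only [kronReduction, hsymm (y : V) z, mul_comm (c x y)]

theorem laplacian_mulVec_harmonicExtension_self (hx : ∑ w ∈ univ.erase x, c x w ≠ 0)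
    (g : {v : V // v ≠ x} → ℝ) : (laplacian c *ᵥ harmonicExtension c x g) x = 0 := by
  rw [sum_erase_eq_sum_subtype_ne] at hx
  rw [laplacian_mulVec_apply, Fintype.sum_eq_add_sum_subtype_ne _ x, sub_self, mul_zero, zero_add]
  simp only [harmonicExtension_of_ne, mul_sub, sum_sub_distrib, ← sum_mul]
  rw [harmonicExtension, dif_pos rfl, sum_erase_eq_sum_subtype_ne, mul_div_cancel₀ _ hx, sub_self]

theorem laplacian_mulVec_harmonicExtension_of_ne (hsymm : ∀ y z, c y z = c z y)
    (hx : ∑ w ∈ univ.erase x, c x w ≠ 0) (g : {v : V // v ≠ x} → ℝ) (y : {v : V // v ≠ x}) :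
    (laplacian c *ᵥ harmonicExtension c x g) y = (laplacian (kronReduction c x) *ᵥ g) y := by
  have hS : ∑ z : {v : V // v ≠ x}, c x z = ∑ w ∈ univ.erase x, c x w :=
    (sum_erase_eq_sum_subtype_ne _ x).symm
  set S := ∑ w ∈ univ.erase x, c x w
  have hxy : ∑ z : {v : V // v ≠ x}, c x y * c x z / S * (g y - g z)
      = c y x * (g y - harmonicExtension c x g x) := by
    rw [harmonicExtension, dif_pos rfl, hsymm y x]
    calc ∑ z : {v : V // v ≠ x}, c x y * c x z / S * (g y - g z)
        = c x y / S * ((∑ z : {v : V // v ≠ x}, c x z) * g y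
            - ∑ z : {v : V // v ≠ x}, c x z * g z) := by
          rw [sum_mul, ← sum_sub_distrib, mul_sum]
          exact sum_congr rfl fun z _ => by ring
      _ = c x y * (g y - (∑ z : {v : V // v ≠ x}, c x z * g z) / S) := by
          rw [hS]
          field_simp
  rw [laplacian_mulVec_apply, laplacian_mulVec_apply, Fintype.sum_eq_add_sum_subtype_ne _ x]
  simp only [kronReduction, add_mul, sum_add_distrib, harmonicExtension_of_ne]
  rw [hxy, add_comm]

theorem dotProduct_laplacian_mulVec_harmonicExtension (hsymm : ∀ y z, c y z = c z y)
    (hx : ∑ w ∈ univ.erase x, c x w ≠ 0) (g : {v : V // v ≠ x} → ℝ) :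
    harmonicExtension c x g ⬝ᵥ laplacian c *ᵥ harmonicExtension c x g
      = g ⬝ᵥ laplacian (kronReduction c x) *ᵥ g := by
  rw [dotProduct, Fintype.sum_eq_add_sum_subtype_ne _ x,
    laplacian_mulVec_harmonicExtension_self hx, mul_zero, zero_add]
  exact sum_congr rfl fun y _ => by
    rw [laplacian_mulVec_harmonicExtension_of_ne hsymm hx, harmonicExtension_of_ne]

theorem sum_subtype_ne_sq_le_sum_sq_sub (f : V → ℝ) (hf : ∑ y : {v : V // v ≠ x}, f y = 0)
    (a : ℝ) : ∑ y : {v : V // v ≠ x}, f y ^ 2 ≤ ∑ z, (f z - a) ^ 2 := by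
  have hexpand : ∑ y : {v : V // v ≠ x}, (f y - a) ^ 2
      = ∑ y : {v : V // v ≠ x}, f y ^ 2 + Fintype.card {v : V // v ≠ x} * a ^ 2 := by
    simp only [sub_sq, sum_add_distrib, sum_sub_distrib, ← sum_mul, ← mul_sum, hf, sum_const,
      card_univ, nsmul_eq_mul]
    ring
  rw [Fintype.sum_eq_add_sum_subtype_ne _ x, hexpand]
  have : 0 ≤ (Fintype.card {v : V // v ≠ x} : ℝ) * a ^ 2 := by positivity
  nlinarith [sq_nonneg (f x - a)]

end Elimination

end Network

open Network in
theorem reduced_network_gap_general {V : Type*} [Fintype V] [DecidableEq V]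
    (c : V → V → ℝ) (hsymm : ∀ y z, c y z = c z y) (hnonneg : ∀ y z, 0 ≤ c y z)
    (hconn : (SimpleGraph.fromRel (fun y z => 0 < c y z)).Connected)
    (x : V) (hx : 0 < ∑ w ∈ univ.erase x, c x w)
    (lam1 lam1x : ℝ)
    (h1min : ∀ mu : ℝ, mu ≠ 0 → rwEig c mu → lam1 ≤ mu)
    (h2 : rwEig (fun y z : {v : V // v ≠ x} =>
            c y z + c x y * c x z / ∑ w ∈ univ.erase x, c x w) lam1x)
    (h2ne : lam1x ≠ 0) :
    lam1 ≤ lam1x := by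
  have : Nonempty V := ⟨x⟩
  obtain ⟨g, hg0, hg⟩ := (rwEig_iff (kronReduction c x) lam1x).1 h2
  set h := harmonicExtension c x g
  have hform : h ⬝ᵥ laplacian c *ᵥ h = lam1x * (g ⬝ᵥ g) := by
    rw [dotProduct_laplacian_mulVec_harmonicExtension hsymm hx.ne', hg, dotProduct_smul,
      smul_eq_mul]
  have hsum : ∑ y : {v : V // v ≠ x}, h y = 0 := by
    simpa only [h, harmonicExtension_of_ne] using
      sum_eq_zero_of_laplacian_mulVec_eq_smul (kronReduction_symm hsymm) h2ne hg
  have hnorm : g ⬝ᵥ g ≤ ∑ z, (h z - (∑ y, h y) / Fintype.card V) ^ 2 := by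
    simpa only [h, harmonicExtension_of_ne, dotProduct, sq] using
      sum_subtype_ne_sq_le_sum_sq_sub h hsum _
  have hray := mul_sum_sq_sub_mean_le hsymm hnonneg hconn h1min h
  have hpos : 0 < g ⬝ᵥ g := (sum_nonneg fun _ _ => mul_self_nonneg _).lt_of_ne
    (Ne.symm (dotProduct_self_eq_zero.not.2 hg0))
  refine le_of_mul_le_mul_right ?_ hpos
  rcases le_total lam1 0 with hlam | hlam
  · exact (mul_nonpos_of_nonpos_of_nonneg hlam hpos.le).trans
      (hform ▸ dotProduct_laplacian_mulVec_nonneg hsymm hnonneg h)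
  · exact (mul_le_mul_of_nonneg_left hnorm hlam).trans (hform ▸ hray)

/-- Network reduction: removing a vertex `x` and replacing the conductances by
`c̃_{yz} = c_{yz} + c_{xy} c_{xz} / ∑_{w ≠ x} c_{xw}` cannot decrease the spectral gap
of the random walk, the gaps being the smallest nonzero eigenvalues of the respective
negative generators. -/
theorem reduced_network_gap {V : Type*} [Fintype V] [DecidableEq V]
    (c : V → V → ℝ) (hsymm : ∀ y z, c y z = c z y) (hnonneg : ∀ y z, 0 ≤ c y z)
    (hconn : (SimpleGraph.fromRel (fun y z => 0 < c y z)).Connected)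
    (x : V) (hx : 0 < ∑ w ∈ univ.erase x, c x w)
    (lam1 lam1x : ℝ)
    (h1 : rwEig c lam1) (h1ne : lam1 ≠ 0)
    (h1min : ∀ mu : ℝ, mu ≠ 0 → rwEig c mu → lam1 ≤ mu)
    (h2 : rwEig (fun y z : {v : V // v ≠ x} =>
            c y z + c x y * c x z / ∑ w ∈ univ.erase x, c x w) lam1x)
    (h2ne : lam1x ≠ 0)
    (h2min : ∀ mu : ℝ, mu ≠ 0 →
      rwEig (fun y z : {v : V // v ≠ x} =>
            c y z + c x y * c x z / ∑ w ∈ univ.erase x, c x w) mu → lam1x ≤ mu) :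
    lam1 ≤ lam1x :=
  reduced_network_gap_general c hsymm hnonneg hconn x hx lam1 lam1x h1min h2 h2ne
end

section
/- If g : V → ℝ is harmonic at x for the random walk on G (i.e. L g(x) = 0, equivalently g(x) = ∑_{y≠x} c_{xy} g(y) / ∑_{w≠x} c_{xw}), then for every z ≠ x, L g(z) = L_x g(z), where L_x is the generator of the random walk on the reduced graph G_x with conductances c̃_{yz} = c_{yz} + c_{xy}c_{xz}/∑_{w≠x} c_{xw}. -/
/-!
Harmonicity at `x` says that the flux `∑_{y ≠ x} c_{xy} (g y - g z)` out of `x`, measured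
against `g z`, equals `(∑_{w ≠ x} c_{xw}) (g x - g z)`. Hence the edge term `c_{zx} (g x - g z)`
of `L g z` can be redistributed over the remaining neighbours `y` of `z` with weights
`c_{xz} c_{xy} / ∑_{w ≠ x} c_{xw}`, which are exactly the extra conductances of `G_x`.
-/

open Finset

theorem sum_mul_sub_eq_of_sum_mul_sub_eq_zero {ι R : Type*} [CommRing R] {s : Finset ι}
    {a g : ι → R} {x : ι} (h : ∑ y ∈ s, a y * (g y - g x) = 0) (z : ι) :
    ∑ y ∈ s, a y * (g y - g z) = (∑ y ∈ s, a y) * (g x - g z) := by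
  calc ∑ y ∈ s, a y * (g y - g z)
      = ∑ y ∈ s, a y * (g y - g x) + ∑ y ∈ s, a y * (g x - g z) := by
        rw [← sum_add_distrib]
        exact sum_congr rfl fun y _ => by ring
    _ = (∑ y ∈ s, a y) * (g x - g z) := by rw [h, zero_add, sum_mul]

theorem harmonic_reduction_general {V : Type*} [Fintype V] [DecidableEq V]
    (c : V → V → ℝ) (hsymm : ∀ y z, c y z = c z y)
    (x : V) (hx : 0 < ∑ w ∈ univ.erase x, c x w)
    (g : V → ℝ)
    (hharm : ∑ y ∈ univ.erase x, c x y * (g y - g x) = 0)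
    (z : V) (hz : z ≠ x) :
    ∑ y ∈ univ.erase z, c z y * (g y - g z) =
      ∑ y ∈ (univ.erase z).erase x,
        (c z y + c x z * c x y / ∑ w ∈ univ.erase x, c x w) * (g y - g z) := by
  set S := ∑ w ∈ univ.erase x, c x w
  have hflux : ∑ y ∈ (univ.erase z).erase x, c x y * (g y - g z) = S * (g x - g z) := by
    rw [erase_right_comm, sum_erase _ (by rw [sub_self, mul_zero])]
    exact sum_mul_sub_eq_of_sum_mul_sub_eq_zero hharm z
  have hredistribute :
      ∑ y ∈ (univ.erase z).erase x, c x z * c x y / S * (g y - g z) = c z x * (g x - g z) := by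
    calc ∑ y ∈ (univ.erase z).erase x, c x z * c x y / S * (g y - g z)
        = c x z / S * ∑ y ∈ (univ.erase z).erase x, c x y * (g y - g z) := by
          rw [mul_sum]
          exact sum_congr rfl fun y _ => by ring
      _ = c z x * (g x - g z) := by
          rw [hflux, hsymm z x]
          field_simp [hx.ne']
  rw [← add_sum_erase _ _ (mem_erase.2 ⟨hz.symm, mem_univ x⟩)]
  simp only [add_mul, sum_add_distrib, hredistribute]
  ring

/-- If `g` is harmonic at `x` for the random walk on `G` (`L g x = 0`), then for every
`z ≠ x`, `L g z = L_x g z`, where `L_x` is the generator of the random walk on the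
reduced graph `G_x` with conductances `c̃_{yz} = c_{yz} + c_{xy}c_{xz}/∑_{w≠x} c_{xw}`. -/
theorem harmonic_reduction {V : Type*} [Fintype V] [DecidableEq V]
    (c : V → V → ℝ) (hsymm : ∀ y z, c y z = c z y) (hnonneg : ∀ y z, 0 ≤ c y z)
    (x : V) (hx : 0 < ∑ w ∈ univ.erase x, c x w)
    (g : V → ℝ)
    (hharm : ∑ y ∈ univ.erase x, c x y * (g y - g x) = 0)
    (z : V) (hz : z ≠ x) :
    ∑ y ∈ univ.erase z, c z y * (g y - g z) =
      ∑ y ∈ (univ.erase z).erase x,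
        (c z y + c x z * c x y / ∑ w ∈ univ.erase x, c x w) * (g y - g z) :=
  harmonic_reduction_general c hsymm x hx g hharm z hz
end

section
/- For n ≥ 4 and any 4-element subset J of V = {0,…,n-1}, the matrix A^J(n) indexed by even permutations of V — with entries A^J_{η,η'} = 2 if η = η' or η⁻¹η' is a product of two disjoint 2-cycles with all entries in J, -1 if η⁻¹η' is a 3-cycle with entries in J, and 0 otherwise — is positive semi-definite. -/
/-!
Let `V_J ≤ A_J` be the Klein four-group and the alternating group of the four points of `J`,
embedded in the alternating group `G` of `Fin n`. Then `A^J_{η,η'} = 3 [η⁻¹η' ∈ V_J] - [η⁻¹η' ∈ A_J]`.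
For subgroups `H ≤ K` of a finite group, the matrix `P_H = ([x⁻¹y ∈ H])_{x,y}` of the partition into
left cosets of `H` satisfies `P_H P_K = P_K P_H = |H| P_K`. Hence for `c = [K : H]` the symmetric
matrix `c P_H - P_K` squares to `|K|` times itself, so it is `|K|` times an orthogonal projection.
-/

open Equiv Matrix Finset

/-- The matrix `A^J(n)` on the alternating group of `Fin n`: entry `2` if `η⁻¹η'` is the
identity or a product of two disjoint 2-cycles with all entries in `J`, `-1` if `η⁻¹η'`
is a 3-cycle with entries in `J`, and `0` otherwise. -/
noncomputable def matAJ (n : ℕ) (J : Finset (Fin n)) :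
    Matrix (alternatingGroup (Fin n)) (alternatingGroup (Fin n)) ℝ :=
  fun η η' =>
    if (η⁻¹ * η' : Perm (Fin n)) = 1 ∨
        ((η⁻¹ * η' : Perm (Fin n)).cycleType = {2, 2} ∧
          (η⁻¹ * η' : Perm (Fin n)).support ⊆ J) then 2
    else if (η⁻¹ * η' : Perm (Fin n)).cycleType = {3} ∧
        (η⁻¹ * η' : Perm (Fin n)).support ⊆ J then -1
    else 0

open scoped ComplexOrder in
theorem Matrix.posSemidef_of_mul_self_eq_smul {n 𝕜 : Type*} [Fintype n] [RCLike 𝕜]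
    {A : Matrix n n 𝕜} (hA : A.IsHermitian) {c : ℝ} (hc : 0 < c) (h : A * A = c • A) :
    A.PosSemidef := by
  have hA_eq : A = c⁻¹ • (Aᴴ * A) := by
    rw [hA.eq, h, smul_smul, inv_mul_cancel₀ hc.ne', one_smul]
  rw [hA_eq]
  exact (posSemidef_conjTranspose_mul_self A).smul (inv_nonneg.mpr hc.le)

namespace Subgroup

variable {G : Type*} [Group G] (R : Type*)

open scoped Classical in
noncomputable def cosetMatrix [Zero R] [One R] (H : Subgroup G) : Matrix G G R :=
  of fun x y => if x⁻¹ * y ∈ H then 1 else 0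

variable {R}

open scoped Classical in
theorem cosetMatrix_apply [Zero R] [One R] (H : Subgroup G) (x y : G) :
    cosetMatrix R H x y = if x⁻¹ * y ∈ H then 1 else 0 :=
  rfl

theorem transpose_cosetMatrix [Zero R] [One R] (H : Subgroup G) :
    (cosetMatrix R H)ᵀ = cosetMatrix R H := by
  ext x y
  rw [transpose_apply, cosetMatrix_apply, cosetMatrix_apply, ← H.inv_mem_iff, _root_.mul_inv_rev,
    inv_inv]

theorem conjTranspose_cosetMatrix [NonAssocSemiring R] [StarRing R] (H : Subgroup G) :
    (cosetMatrix R H)ᴴ = cosetMatrix R H := by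
  ext x y
  rw [conjTranspose_apply, ← transpose_apply (cosetMatrix R H), transpose_cosetMatrix,
    cosetMatrix_apply]
  split_ifs <;> simp

variable [Fintype G]

theorem cosetMatrix_mul_cosetMatrix_of_le [NonAssocSemiring R] {H K : Subgroup G} (hHK : H ≤ K) :
    cosetMatrix R H * cosetMatrix R K = Nat.card H • cosetMatrix R K := by
  classical
  ext x y
  have hK : ∀ z, x⁻¹ * z ∈ H → (z⁻¹ * y ∈ K ↔ x⁻¹ * y ∈ K) := fun z hz => by
    rw [← K.mul_mem_cancel_left (hHK hz)]
    group
  have hcard : ∑ z, (if x⁻¹ * z ∈ H then 1 else 0 : R) = Nat.card H := by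
    refine (Equiv.sum_comp (Equiv.mulLeft x⁻¹) fun g => if g ∈ H then (1 : R) else 0).trans ?_
    simp [Finset.sum_boole, Nat.card_eq_fintype_card, Fintype.card_subtype]
  calc (cosetMatrix R H * cosetMatrix R K) x y
      = ∑ z, (if x⁻¹ * z ∈ H then 1 else 0) * cosetMatrix R K x y := by
        refine Finset.sum_congr rfl fun z _ => ?_
        by_cases hz : x⁻¹ * z ∈ H
        · simp [cosetMatrix_apply, hz, hK z hz]
        · simp [cosetMatrix_apply, hz]
    _ = (Nat.card H • cosetMatrix R K) x y := by
        rw [← Finset.sum_mul, hcard, Matrix.smul_apply, nsmul_eq_mul]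

theorem cosetMatrix_mul_cosetMatrix_of_ge [CommSemiring R] {H K : Subgroup G} (hHK : H ≤ K) :
    cosetMatrix R K * cosetMatrix R H = Nat.card H • cosetMatrix R K := by
  rw [← transpose_cosetMatrix H, ← transpose_cosetMatrix K, ← transpose_mul,
    cosetMatrix_mul_cosetMatrix_of_le hHK, transpose_smul]

theorem nsmul_cosetMatrix_sub_mul_self [CommRing R] {H K : Subgroup G} (hHK : H ≤ K) {c : ℕ}
    (hc : c * Nat.card H = Nat.card K) :
    (c • cosetMatrix R H - cosetMatrix R K) * (c • cosetMatrix R H - cosetMatrix R K) =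
      Nat.card K • (c • cosetMatrix R H - cosetMatrix R K) := by
  have hHH := cosetMatrix_mul_cosetMatrix_of_le (R := R) (le_refl H)
  have hKK := cosetMatrix_mul_cosetMatrix_of_le (R := R) (le_refl K)
  have hHK' := cosetMatrix_mul_cosetMatrix_of_le (R := R) hHK
  have hKH := cosetMatrix_mul_cosetMatrix_of_ge (R := R) hHK
  simp only [sub_mul, mul_sub, smul_mul_assoc, mul_smul_comm, hHH, hKK, hHK', hKH]
  rw [← hc]
  module

open scoped ComplexOrder in
theorem posSemidef_nsmul_cosetMatrix_sub {𝕜 : Type*} [RCLike 𝕜] {H K : Subgroup G}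
    (hHK : H ≤ K) {c : ℕ} (hc : c * Nat.card H = Nat.card K) :
    (c • cosetMatrix 𝕜 H - cosetMatrix 𝕜 K).PosSemidef := by
  refine posSemidef_of_mul_self_eq_smul ?_ (Nat.cast_pos.mpr (Nat.card_pos (α := K))) ?_
  · rw [IsHermitian, conjTranspose_sub, conjTranspose_nsmul, conjTranspose_cosetMatrix,
      conjTranspose_cosetMatrix]
  · rw [Nat.cast_smul_eq_nsmul]
    exact nsmul_cosetMatrix_sub_mul_self hHK hc

end Subgroup

namespace Equiv.Perm

variable {α : Type*} [Fintype α] [DecidableEq α]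

theorem cycleType_eq_of_sign_eq_one_of_card_support_le_four {σ : Perm α} (hσ : sign σ = 1)
    (h4 : #σ.support ≤ 4) : σ.cycleType = 0 ∨ σ.cycleType = {2, 2} ∨ σ.cycleType = {3} := by
  have hsum : σ.cycleType.sum ≤ 4 := σ.sum_cycleType ▸ h4
  have heven : Even (σ.cycleType.sum + Multiset.card σ.cycleType) := by
    rwa [sign_of_cycleType, neg_one_pow_eq_one_iff_even (by decide)] at hσ
  have hmem : ∀ k ∈ σ.cycleType, 2 ≤ k := fun _ => two_le_of_mem_cycleType
  have htwo : Multiset.card σ.cycleType • 2 ≤ σ.cycleType.sum := Multiset.card_nsmul_le_sum hmem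
  obtain h0 | h1 | h2 : Multiset.card σ.cycleType = 0 ∨ Multiset.card σ.cycleType = 1 ∨
      Multiset.card σ.cycleType = 2 := by
    rw [smul_eq_mul] at htwo
    omega
  · exact .inl (Multiset.card_eq_zero.mp h0)
  · obtain ⟨a, ha⟩ := Multiset.card_eq_one.mp h1
    rw [ha] at hsum heven hmem
    simp only [Multiset.sum_singleton, Multiset.card_singleton, Multiset.mem_singleton,
      forall_eq] at hsum heven hmem
    have ha3 : a = 3 := by
      obtain ⟨k, hk⟩ := heven
      omega
    exact .inr (.inr (ha3 ▸ ha))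
  · obtain ⟨a, b, hab⟩ := Multiset.card_eq_two.mp h2
    rw [hab] at hsum hmem
    simp only [Multiset.insert_eq_cons, Multiset.sum_cons, Multiset.sum_singleton,
      Multiset.mem_cons, Multiset.mem_singleton, forall_eq_or_imp, forall_eq] at hsum hmem
    obtain ⟨rfl, rfl⟩ : a = 2 ∧ b = 2 := by omega
    exact .inr (.inl hab)

end Equiv.Perm

namespace alternatingGroup

variable {α : Type*} [Fintype α] [DecidableEq α] {J : Finset α}

theorem mem_map_kleinFour_ofSubtype_iff (hJ : #J = 4) {g : alternatingGroup α} :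
    g ∈ (kleinFour J).map (ofSubtype J) ↔
      (g : Perm α).support ⊆ J ∧ (g = 1 ∨ (g : Perm α).cycleType = {2, 2}) := by
  have hJ' : Nat.card J = 4 := by simpa using hJ
  rw [← mem_range_ofSubtype_iff]
  constructor
  · rintro ⟨τ, hτ, rfl⟩
    rw [coe_kleinFour_of_card_eq_four hJ'] at hτ
    refine ⟨⟨τ, rfl⟩, ?_⟩
    rcases hτ with rfl | hτ
    · exact .inl (map_one _)
    · exact .inr (by rwa [coe_ofSubtype, Perm.cycleType_ofSubtype])
  · rintro ⟨⟨τ, rfl⟩, hg⟩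
    refine ⟨τ, ?_, rfl⟩
    rw [coe_kleinFour_of_card_eq_four hJ']
    rcases hg with hg | hg
    · exact .inl (ofSubtype_injective (hg.trans (map_one _).symm))
    · exact .inr (by rwa [coe_ofSubtype, Perm.cycleType_ofSubtype] at hg)

end alternatingGroup

open Subgroup alternatingGroup in
theorem matAJ_eq_cosetMatrix {n : ℕ} {J : Finset (Fin n)} (hJ : #J = 4) :
    matAJ n J = 3 • cosetMatrix ℝ ((kleinFour J).map (ofSubtype J)) -
      cosetMatrix ℝ (ofSubtype J).range := by
  ext x y
  obtain ⟨g, hg⟩ : ∃ g, x⁻¹ * y = g := ⟨_, rfl⟩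
  have hxy : (x⁻¹ * y : Perm (Fin n)) = g := by rw [← hg]; rfl
  simp only [matAJ, hxy, Matrix.sub_apply, Matrix.smul_apply, cosetMatrix_apply, hg,
    mem_map_kleinFour_ofSubtype_iff hJ, mem_range_ofSubtype_iff]
  by_cases hgJ : (g : Perm (Fin n)).support ⊆ J
  · have hg4 : #(g : Perm (Fin n)).support ≤ 4 := hJ ▸ card_le_card hgJ
    rcases Perm.cycleType_eq_of_sign_eq_one_of_card_support_le_four g.2 hg4 with h | h | h
    · obtain rfl : g = 1 := Subtype.ext (Perm.cycleType_eq_zero.mp h)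
      norm_num
    · norm_num [hgJ, h]
    · have h1 : g ≠ 1 := by rintro rfl; simp at h
      simp [hgJ, h, h1]
  · have h1 : (g : Perm (Fin n)) ≠ 1 := by rintro h; simp [h] at hgJ
    simp [hgJ, h1]

theorem matAJ_posSemidef_general (n : ℕ) (J : Finset (Fin n)) (hJ : J.card = 4) :
    (matAJ n J).PosSemidef := by
  have hJ' : Nat.card J = 4 := by simpa using hJ
  rw [matAJ_eq_cosetMatrix hJ]
  refine Subgroup.posSemidef_nsmul_cosetMatrix_sub (Subgroup.map_le_range _ _) ?_
  rw [Subgroup.card_map_of_injective alternatingGroup.ofSubtype_injective,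
    alternatingGroup.kleinFour_card_of_card_eq_four hJ', MonoidHom.range_eq_map,
    Subgroup.card_map_of_injective alternatingGroup.ofSubtype_injective, Subgroup.card_top,
    alternatingGroup.card_of_card_eq_four hJ']

/-- For `n ≥ 4` and any 4-element subset `J` of `{0,…,n-1}`, the matrix `A^J(n)` is
positive semi-definite. -/
theorem matAJ_posSemidef (n : ℕ) (hn : 4 ≤ n) (J : Finset (Fin n)) (hJ : J.card = 4) :
    (matAJ n J).PosSemidef :=
  matAJ_posSemidef_general n J hJ
end

section
/- For n ≥ 5 and any 5-element subset K of V = {0,…,n-1} containing 0, the matrix B^K(n) := ∑_{J ⊆ K, |J| = 4} ε_J A^J(n) is positive semi-definite, where ε_J = 1 if 0 ∈ J and ε_J = -1 otherwise. -/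
/-!
The entry of `B^K(n)` at `(η, η')` depends only on the support `S` of `σ = η⁻¹η'`: writing the
five `J` as `K \ {x}`, it is the `A^J`-weight of `σ` times `∑_{x ∈ K \ S} ε_{K \ {x}}`, so
`B^K(n) = (f (η⁻¹η'))` for a function `f` on the alternating group with `f σ⁻¹ = f σ`. Such a
matrix is symmetric and its square is the matrix of the convolution `f * f`. Now `f` is supported
on the permutations moving only points of `K`, a copy of `A₅`, and on `A₅` a finite computation
gives `f * f = 24 f`. Hence `B² = 24 B`, and `B = Bᵀ B / 24` is positive semi-definite.
-/

open Equiv Matrix Finset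

open Equiv.Perm

section Entry

variable {α : Type*} [DecidableEq α]

theorem Finset.powersetCard_eq_image_erase {K : Finset α} {m : ℕ} (hK : K.card = m + 1) :
    K.powersetCard m = K.image K.erase := by
  ext J
  simp only [mem_powersetCard, mem_image]
  constructor
  · rintro ⟨hJK, hJ⟩
    obtain ⟨x, hx⟩ : (K \ J).Nonempty := by
      rw [← card_pos, card_sdiff_of_subset hJK]
      omega
    rw [mem_sdiff] at hx
    refine ⟨x, hx.1, (eq_of_subset_of_card_le (subset_erase.2 ⟨hJK, hx.2⟩) ?_).symm⟩
    rw [card_erase_of_mem hx.1]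
    omega
  · rintro ⟨x, hx, rfl⟩
    exact ⟨erase_subset x K, by rw [card_erase_of_mem hx, hK, Nat.add_sub_cancel]⟩

theorem sum_powersetCard_signed_indicator {K S : Finset α} {p : α} {m : ℕ}
    (hK : K.card = m + 1) (hp : p ∈ K) (hS : S ⊆ K) :
    ∑ J ∈ K.powersetCard m, (if S ⊆ J then if p ∈ J then 1 else -1 else 0 : ℤ) =
      (K \ S).card - if p ∈ S then 0 else 2 := by
  have hterm : ∀ x ∈ K, (if S ⊆ K.erase x then if p ∈ K.erase x then 1 else -1 else 0 : ℤ) =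
      if x ∈ K \ S then 1 - if p = x then 2 else 0 else 0 := by
    intro x hx
    simp only [subset_erase, mem_erase, mem_sdiff, hS, hp, hx, true_and, and_true]
    split_ifs <;> simp_all
  rw [Finset.powersetCard_eq_image_erase hK, sum_image (erase_injOn K), sum_congr rfl hterm,
    ← sum_filter, filter_mem_eq_inter, inter_eq_right.2 sdiff_subset, sum_sub_distrib,
    sum_ite_eq]
  simp [mem_sdiff, hp]

/-- For an even permutation, support size `0`, `4`, `3` means identity, double transposition,
`3`-cycle: this is the nonzero entry of `A^J` as a function of the support size. -/
def supportWeight (k : ℕ) : ℤ :=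
  if k = 0 ∨ k = 4 then 2 else if k = 3 then -1 else 0

/-- The entry of `B^K` at `(η, η')`, where `S` is the support of `η⁻¹η'` and `p` plays the role
of `0`. -/
def entryBK (K : Finset α) (p : α) (S : Finset α) : ℤ :=
  if S ⊆ K then supportWeight S.card * ((K \ S).card - if p ∈ S then 0 else 2) else 0

theorem sum_powersetCard_four_eq_entryBK {K : Finset α} {p : α} (hK : K.card = 5) (hp : p ∈ K)
    (S : Finset α) :
    ∑ J ∈ K.powersetCard 4,
      (if p ∈ J then 1 else -1) * (if S ⊆ J then supportWeight S.card else 0) = entryBK K p S := by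
  by_cases hS : S ⊆ K
  · rw [entryBK, if_pos hS, ← sum_powersetCard_signed_indicator hK hp hS, mul_sum]
    refine sum_congr rfl fun J _ => ?_
    split_ifs <;> ring
  · rw [entryBK, if_neg hS]
    refine sum_eq_zero fun J hJ => ?_
    have hSJ : ¬S ⊆ J := fun hSJ => hS (hSJ.trans (mem_powersetCard.1 hJ).1)
    rw [if_neg hSJ, mul_zero]

theorem subset_of_entryBK_ne_zero {K S : Finset α} {p : α} (h : entryBK K p S ≠ 0) : S ⊆ K := by
  by_contra hS
  exact h (if_neg hS)

theorem entryBK_map {β : Type*} [DecidableEq β] (ι : β ↪ α) (K : Finset β) (q : β)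
    (S : Finset β) : entryBK (K.map ι) (ι q) (S.map ι) = entryBK K q S := by
  simp only [entryBK, map_subset_map, ← Finset.map_sdiff, card_map, mem_map']

end Entry

section Permutations

variable {α : Type*} [DecidableEq α] [Fintype α]

theorem Equiv.Perm.card_support_eq_four_iff {σ : Perm α} (hσ : σ ∈ alternatingGroup α) :
    σ.support.card = 4 ↔ σ.cycleType = {2, 2} := by
  refine ⟨fun h => ?_, fun h => by rw [← sum_cycleType, h]; rfl⟩
  rw [← sum_cycleType] at h
  rw [mem_alternatingGroup, sign_of_cycleType, h, neg_one_pow_eq_one_iff_even (by decide)] at hσ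
  have htwo : ∀ k ∈ σ.cycleType, 2 ≤ k := fun k hk => two_le_of_mem_cycleType hk
  have hcard : Multiset.card σ.cycleType = 2 := by
    have hle := Multiset.card_nsmul_le_sum htwo
    have hpos : 0 < Multiset.card σ.cycleType := Multiset.card_pos.2 fun h0 => by simp [h0] at h
    obtain ⟨r, hr⟩ := hσ
    rw [smul_eq_mul] at hle
    omega
  obtain ⟨a, b, hab⟩ := Multiset.card_eq_two.1 hcard
  have ha := htwo a (by simp [hab])
  have hb := htwo b (by simp [hab])
  simp only [hab, Multiset.insert_eq_cons, Multiset.sum_cons, Multiset.sum_singleton] at h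
  rw [hab, show a = 2 by omega, show b = 2 by omega]

theorem matAJ_entry_eq_supportWeight (J : Finset α) {σ : Perm α} (hσ : σ ∈ alternatingGroup α) :
    (if σ = 1 ∨ (σ.cycleType = {2, 2} ∧ σ.support ⊆ J) then (2 : ℝ)
      else if σ.cycleType = {3} ∧ σ.support ⊆ J then -1 else 0) =
      ((if σ.support ⊆ J then supportWeight σ.support.card else 0 : ℤ) : ℝ) := by
  have h3 : σ.cycleType = {3} ↔ σ.support.card = 3 := card_support_eq_three_iff.symm
  by_cases hJ : σ.support ⊆ J
  · simp only [← card_support_eq_zero, ← card_support_eq_four_iff hσ, h3, hJ, and_true, if_true,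
      supportWeight]
    push_cast
    rfl
  · have hσ1 : σ ≠ 1 := by rintro rfl; simp at hJ
    simp [hJ, hσ1]

theorem Equiv.Perm.support_permCongr {β : Type*} [DecidableEq β] [Fintype β] (e : β ≃ α)
    (π : Perm β) : (e.permCongr π).support = π.support.map e.toEmbedding := by
  ext x
  simp [mem_map_equiv, Equiv.permCongr_apply, ← Equiv.eq_symm_apply]

end Permutations

theorem matAJ_apply {n : ℕ} (J : Finset (Fin n)) (η η' : alternatingGroup (Fin n)) :
    matAJ n J η η' =
      ((if ((η⁻¹ * η' : alternatingGroup (Fin n)) : Perm (Fin n)).support ⊆ J then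
        supportWeight ((η⁻¹ * η' : alternatingGroup (Fin n)) : Perm (Fin n)).support.card
        else 0 : ℤ) : ℝ) :=
  matAJ_entry_eq_supportWeight J (η⁻¹ * η').2

theorem sum_smul_matAJ_eq_entryBK {n : ℕ} [NeZero n] {K : Finset (Fin n)} (hK : K.card = 5)
    (h0K : (0 : Fin n) ∈ K) :
    ∑ J ∈ K.powersetCard 4, (if (0 : Fin n) ∈ J then (1 : ℝ) else -1) • matAJ n J =
      Matrix.of fun η η' : alternatingGroup (Fin n) =>
        (entryBK K 0 ((η⁻¹ * η' : alternatingGroup (Fin n)) : Perm (Fin n)).support : ℝ) := by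
  ext η η'
  rw [of_apply, ← sum_powersetCard_four_eq_entryBK hK h0K, Matrix.sum_apply]
  simp only [Matrix.smul_apply, matAJ_apply, smul_eq_mul]
  push_cast
  rfl

theorem posSemidef_of_convolution_eq_smul {G : Type*} [Group G] [Fintype G] (f : G → ℝ)
    (hinv : ∀ g, f g⁻¹ = f g) {c : ℝ} (hc : 0 < c)
    (hconv : ∀ σ, ∑ τ, f τ * f (τ⁻¹ * σ) = c * f σ) :
    (Matrix.of fun a b : G => f (a⁻¹ * b)).PosSemidef := by
  set M := Matrix.of fun a b : G => f (a⁻¹ * b) with hMf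
  have hM : Mᴴ = M := by
    ext a b
    simp [hMf, ← hinv (a⁻¹ * b)]
  have hsq : M * M = c • M := by
    ext a b
    simp only [hMf, Matrix.mul_apply, of_apply, Matrix.smul_apply, smul_eq_mul, ← hconv]
    exact Fintype.sum_equiv (Equiv.mulLeft a⁻¹) _ _ fun τ => by
      simp only [Equiv.coe_mulLeft, _root_.mul_inv_rev, inv_inv, mul_assoc, mul_inv_cancel_left]
  have hMM : M = c⁻¹ • (Mᴴ * M) := by
    rw [hM, hsq, smul_smul, inv_mul_cancel₀ hc.ne', one_smul]
  rw [hMM]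
  exact (posSemidef_conjTranspose_mul_self M).smul (inv_nonneg.2 hc.le)

theorem sum_mul_inv_mul_eq_of_injective {G H R : Type*} [Group G] [Group H] [Fintype G]
    [Fintype H] [NonUnitalNonAssocSemiring R] (φ : H →* G) (hφ : Function.Injective φ)
    {f : G → R} (hf : ∀ g, f g ≠ 0 → g ∈ φ.range) {c : R}
    (hconv : ∀ k, ∑ h, f (φ h) * f (φ (h⁻¹ * k)) = c * f (φ k)) (σ : G) :
    ∑ τ, f τ * f (τ⁻¹ * σ) = c * f σ := by
  by_cases hσ : σ ∈ φ.range
  · obtain ⟨k, rfl⟩ := hσ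
    rw [← hconv k]
    refine (Fintype.sum_of_injective φ hφ _ _ (fun τ hτ => ?_) fun h => by simp).symm
    rw [of_not_not fun hτ' => hτ (hf τ hτ'), zero_mul]
  · rw [of_not_not fun hσ' => hσ (hf σ hσ'), mul_zero]
    refine sum_eq_zero fun τ _ => ?_
    by_cases h1 : f τ = 0
    · rw [h1, zero_mul]
    by_cases h2 : f (τ⁻¹ * σ) = 0
    · rw [h2, mul_zero]
    exact absurd (by simpa using mul_mem (hf τ h1) (hf _ h2)) hσ

theorem entryBK_fin_five_convolution (σ : alternatingGroup (Fin 5)) :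
    ∑ τ : alternatingGroup (Fin 5), entryBK univ 0 (τ : Perm (Fin 5)).support *
      entryBK univ 0 ((τ⁻¹ * σ : alternatingGroup (Fin 5)) : Perm (Fin 5)).support =
      24 * entryBK univ 0 (σ : Perm (Fin 5)).support := by
  -- Restricting to the `τ` with nonzero entry halves the kernel's work.
  rw [← sum_filter_of_ne fun τ _ h => left_ne_zero_of_mul h]
  revert σ
  decide +kernel

theorem entryBK_convolution {α : Type*} [DecidableEq α] [Fintype α] {K : Finset α} {p : α}
    (hK : K.card = 5) (hp : p ∈ K) (σ : alternatingGroup α) :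
    ∑ τ : alternatingGroup α, entryBK K p (τ : Perm α).support *
      entryBK K p ((τ⁻¹ * σ : alternatingGroup α) : Perm α).support =
      24 * entryBK K p (σ : Perm α).support := by
  obtain ⟨e, he⟩ : ∃ e : Fin 5 ≃ K, e 0 = ⟨p, hp⟩ :=
    let e₀ := (K.equivFinOfCardEq hK).symm
    ⟨e₀.trans (swap (e₀ 0) ⟨p, hp⟩), swap_apply_left _ _⟩
  set ι : Fin 5 ↪ α := e.toEmbedding.trans (Function.Embedding.subtype _)
  have hιK : univ.map ι = K := by
    rw [← Finset.map_map, univ_map_equiv_to_embedding, univ_eq_attach, attach_map_val]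
  have hι0 : ι 0 = p := by simp [ι, he]
  set φ := (alternatingGroup.ofSubtype K).comp e.altCongrHom.toMonoidHom
  have hφ : ∀ π, entryBK K p ((φ π : alternatingGroup α) : Perm α).support =
      entryBK univ 0 (π : Perm (Fin 5)).support := by
    intro π
    rw [← entryBK_map ι, hιK, hι0]
    simp [φ, ι, alternatingGroup.coe_ofSubtype, support_ofSubtype, support_permCongr,
      Finset.map_map]
  refine sum_mul_inv_mul_eq_of_injective φ
    (alternatingGroup.ofSubtype_injective.comp e.altCongrHom.injective) (fun g hg => ?_)
    (fun k => ?_) σ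
  · obtain ⟨u, rfl⟩ := (alternatingGroup.mem_range_ofSubtype_iff K g).2
      (subset_of_entryBK_ne_zero hg)
    exact ⟨e.altCongrHom.symm u, by simp [φ]⟩
  · simp only [hφ]
    exact entryBK_fin_five_convolution k

theorem matBK_posSemidef_general (n : ℕ) [NeZero n]
    (K : Finset (Fin n)) (hK : K.card = 5) (h0K : (0 : Fin n) ∈ K) :
    (∑ J ∈ K.powersetCard 4,
        (if (0 : Fin n) ∈ J then (1 : ℝ) else -1) • matAJ n J).PosSemidef := by
  rw [sum_smul_matAJ_eq_entryBK hK h0K]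
  refine posSemidef_of_convolution_eq_smul
    (fun g : alternatingGroup (Fin n) => (entryBK K 0 (g : Perm (Fin n)).support : ℝ))
    (fun g => ?_) (by norm_num : (0 : ℝ) < 24) fun σ => ?_
  · simp
  · exact_mod_cast entryBK_convolution hK h0K σ

/-- For `n ≥ 5` and any 5-element subset `K` of `{0,…,n-1}` containing `0`, the matrix
`B^K(n) = ∑_{J ⊆ K, |J|=4} ε_J A^J(n)` is positive semi-definite, where `ε_J = 1`
if `0 ∈ J` and `ε_J = -1` otherwise. -/
theorem matBK_posSemidef (n : ℕ) [NeZero n] (hn : 5 ≤ n)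
    (K : Finset (Fin n)) (hK : K.card = 5) (h0K : (0 : Fin n) ∈ K) :
    (∑ J ∈ K.powersetCard 4,
        (if (0 : Fin n) ∈ J then (1 : ℝ) else -1) • matAJ n J).PosSemidef :=
  matBK_posSemidef_general n K hK h0K
end

section
/- Let c₁,…,c_{n-1} ≥ 0, c₀ := -∑_{i≥1} c_i < 0, and c_J := ∏_{i∈J} c_i for J ⊆ {0,…,n-1}. For n ≥ 5, the inequality ∑_{K ∋ 0, |K|=5, K ⊇ J} ε_J |c_K| / |c₀| ≤ -c_J holds for every 4-element subset J of {0,…,n-1}, where ε_J = 1 if 0 ∈ J and ε_J = -1 otherwise. -/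
/-!
If `0 ∈ J`, the 5-sets `K ⊇ J` are the sets `insert j J` with `j ∉ J`, and
`|c_K| = c_j · |c_J| = c_j · (-c_J)`. The sum is therefore `(∑_{j ∉ J} c_j) / |c_0| · (-c_J)`,
and `∑_{j ∉ J} c_j ≤ ∑_{i ≠ 0} c_i = |c_0|` because all these weights are nonnegative.
If `0 ∉ J`, the only such `K` is `insert 0 J`, and the inequality is an equality.
-/

open Finset

namespace Finset

variable {α M : Type*} [Fintype α] [DecidableEq α] [AddCommMonoid M]

theorem filter_superset_powersetCard_card (s : Finset α) :
    (univ.powersetCard #s).filter (s ⊆ ·) = {s} := by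
  rw [filter_powersetCard_subset s univ #s (subset_univ s) le_rfl, Nat.sub_self,
    powersetCard_zero, image_singleton, empty_union]

theorem sum_filter_superset_powersetCard_card_add_one (s : Finset α) (f : Finset α → M) :
    ∑ t ∈ (univ.powersetCard (#s + 1)).filter (s ⊆ ·), f t = ∑ a ∈ sᶜ, f (insert a s) := by
  rw [filter_powersetCard_subset s univ _ (subset_univ s) (Nat.le_add_right _ 1),
    Nat.add_sub_cancel_left, powersetCard_one, sum_image, sum_map, compl_eq_univ_sdiff]
  · rfl
  · intro t ht u hu htu
    simp only [coe_map, Set.mem_image, mem_coe, mem_sdiff] at ht hu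
    obtain ⟨a, ⟨-, ha⟩, rfl⟩ := ht
    obtain ⟨b, ⟨-, hb⟩, rfl⟩ := hu
    simpa [ha, hb] using congrArg (· \ s) htu

end Finset

section SignedWeights

variable {α : Type*} {c : α → ℝ} {a : α}

theorem prod_nonneg_of_notMem (hc : ∀ i, i ≠ a → 0 ≤ c i) {s : Finset α} (ha : a ∉ s) :
    0 ≤ ∏ i ∈ s, c i :=
  prod_nonneg fun i hi => hc i (ne_of_mem_of_not_mem hi ha)

theorem abs_prod_of_mem [DecidableEq α] (hc : ∀ i, i ≠ a → 0 ≤ c i) (hca : c a ≤ 0)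
    {s : Finset α} (ha : a ∈ s) : |∏ i ∈ s, c i| = -∏ i ∈ s, c i := by
  refine abs_of_nonpos ?_
  rw [← mul_prod_erase s c ha]
  exact mul_nonpos_of_nonpos_of_nonneg hca (prod_nonneg_of_notMem hc (notMem_erase a s))

theorem sum_compl_le_neg_of_mem [Fintype α] [DecidableEq α] (hc : ∀ i, i ≠ a → 0 ≤ c i)
    (hca : c a = -∑ i ∈ univ.erase a, c i) {s : Finset α} (ha : a ∈ s) :
    ∑ i ∈ sᶜ, c i ≤ -c a := by
  rw [hca, neg_neg]
  exact sum_le_sum_of_subset_of_nonneg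
    (fun i hi => mem_erase.2 ⟨(ne_of_mem_of_not_mem ha (mem_compl.1 hi)).symm, mem_univ i⟩)
    fun i hi _ => hc i (ne_of_mem_erase hi)

end SignedWeights

theorem coefficient_inequality_general (n : ℕ) [NeZero n]
    (c : Fin n → ℝ) (hc : ∀ i, i ≠ 0 → 0 ≤ c i)
    (hc0 : c 0 = -∑ i ∈ univ.erase 0, c i) (hc0neg : c 0 < 0)
    (J : Finset (Fin n)) (hJ : J.card = 4) :
    ∑ K ∈ (univ.powersetCard 5).filter (fun K => (0 : Fin n) ∈ K ∧ J ⊆ K),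
        (if (0 : Fin n) ∈ J then (1 : ℝ) else -1) * |∏ i ∈ K, c i| / |c 0| ≤
      -∏ i ∈ J, c i := by
  have hc0abs : |c 0| = -c 0 := abs_of_neg hc0neg
  simp_rw [← insert_subset_iff]
  by_cases h0 : (0 : Fin n) ∈ J
  · have hJabs : |∏ i ∈ J, c i| = -∏ i ∈ J, c i := abs_prod_of_mem hc hc0neg.le h0
    rw [insert_eq_of_mem h0, show 5 = #J + 1 by omega,
      sum_filter_superset_powersetCard_card_add_one, if_pos h0]
    have hterm : ∀ j ∈ Jᶜ, 1 * |∏ i ∈ insert j J, c i| / |c 0| =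
        c j * (-∏ i ∈ J, c i) / -c 0 := by
      intro j hj
      have hj0 : j ≠ 0 := (ne_of_mem_of_not_mem h0 (mem_compl.1 hj)).symm
      rw [prod_insert (mem_compl.1 hj), abs_mul, abs_of_nonneg (hc j hj0), hJabs, hc0abs,
        one_mul]
    rw [sum_congr rfl hterm, ← sum_div, ← sum_mul, div_le_iff₀ (neg_pos.2 hc0neg), mul_comm]
    exact mul_le_mul_of_nonneg_left (sum_compl_le_neg_of_mem hc hc0 h0) (hJabs ▸ abs_nonneg _)
  · have hcard : #(insert 0 J) = 5 := by rw [card_insert_of_notMem h0, hJ]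
    rw [← hcard, filter_superset_powersetCard_card, sum_singleton, if_neg h0, prod_insert h0,
      abs_mul, abs_of_nonneg (prod_nonneg_of_notMem hc h0), hc0abs, mul_div_assoc,
      mul_div_cancel_left₀ _ (neg_ne_zero.2 hc0neg.ne), neg_one_mul]

/-- With `c i ≥ 0` for `i ≠ 0` and `c 0 = -∑_{i≠0} c i < 0`, for every 4-element
subset `J` of `{0,…,n-1}` (`n ≥ 5`):
`∑_{K ∋ 0, |K| = 5, K ⊇ J} ε_J |c_K| / |c_0| ≤ -c_J`, where `c_S = ∏_{i∈S} c i` and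
`ε_J = 1` if `0 ∈ J`, `ε_J = -1` otherwise. -/
theorem coefficient_inequality (n : ℕ) [NeZero n] (hn : 5 ≤ n)
    (c : Fin n → ℝ) (hc : ∀ i, i ≠ 0 → 0 ≤ c i)
    (hc0 : c 0 = -∑ i ∈ univ.erase 0, c i) (hc0neg : c 0 < 0)
    (J : Finset (Fin n)) (hJ : J.card = 4) :
    ∑ K ∈ (univ.powersetCard 5).filter (fun K => (0 : Fin n) ∈ K ∧ J ⊆ K),
        (if (0 : Fin n) ∈ J then (1 : ℝ) else -1) * |∏ i ∈ K, c i| / |c 0| ≤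
      -∏ i ∈ J, c i :=
  coefficient_inequality_general n c hc hc0 hc0neg J hJ
end

section
/- For reals c₁,…,c_{n-1}, the identity (∑_{1≤i<j} c_ic_j)² - ∑_{1≤i<j} (c_ic_j)² = 2∑_{i<j<k}(c_i²c_jc_k + c_ic_j²c_k + c_ic_jc_k²) + 6∑_{i<j<k<l} c_ic_jc_kc_l holds; moreover, if additionally c₀ = -∑_{i≥1} c_i and sums range over 0 ≤ i < j (< k < l) ≤ n-1, then (∑_{i<j} c_ic_j)² - ∑_{i<j}(c_ic_j)² = -2 ∑_{i<j<k<l} c_ic_jc_kc_l. -/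
/-!
Write `e_k(f)` for `∑_{|S| = k} ∏_{i ∈ S} f i` and `p = ∑ f i`. Adjoining an index `a` gives
`e_{k+1}(f) ↦ e_{k+1}(f) + f a * e_k(f)`, and induction on the index set then yields
`∑_{|S| = k} (∏_S f) (∑_S f) = p e_k - (k + 1) e_{k+1}` and `e_2(f²) = e_2² - 2 p e_3 + 2 e_4`.
Hence `e_2² - e_2(f²) = 2 p e_3 - 2 e_4 = 2 (p e_3 - 4 e_4) + 6 e_4`, the first identity;
when `p = 0` it is `-2 e_4`, the second.
-/

open Finset

namespace Finset

variable {α R : Type*} [CommRing R] (f : α → R)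

theorem esymm_one (s : Finset α) : ∑ S ∈ s.powersetCard 1, ∏ i ∈ S, f i = ∑ i ∈ s, f i := by
  simp [powersetCard_one]

theorem powersetCard_succ_empty (k : ℕ) : (∅ : Finset α).powersetCard (k + 1) = ∅ := rfl

variable [DecidableEq α]

theorem sum_powersetCard_succ_insert {M : Type*} [AddCommMonoid M] {a : α}
    {s : Finset α} (ha : a ∉ s) (k : ℕ) (g : Finset α → M) :
    ∑ S ∈ (insert a s).powersetCard (k + 1), g S =
      ∑ S ∈ s.powersetCard (k + 1), g S + ∑ S ∈ s.powersetCard k, g (insert a S) := by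
  rw [powersetCard_succ_insert ha, sum_union, sum_image]
  · intro S hS T hT hST
    have notMem {U} (hU : U ∈ (s.powersetCard k : Set (Finset α))) : a ∉ U :=
      fun h => ha ((mem_powersetCard.1 hU).1 h)
    rw [← erase_insert (notMem hS), ← erase_insert (notMem hT), hST]
  · exact disjoint_left.2 fun S hS hS' => by
      obtain ⟨T, -, rfl⟩ := mem_image.1 hS'
      exact ha ((mem_powersetCard.1 hS).1 (mem_insert_self a T))

theorem esymm_succ_insert {a : α} {s : Finset α} (ha : a ∉ s) (k : ℕ) :
    ∑ S ∈ (insert a s).powersetCard (k + 1), ∏ i ∈ S, f i =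
      ∑ S ∈ s.powersetCard (k + 1), ∏ i ∈ S, f i + f a * ∑ S ∈ s.powersetCard k, ∏ i ∈ S, f i := by
  rw [sum_powersetCard_succ_insert ha, mul_sum]
  congr 1
  exact sum_congr rfl fun S hS => prod_insert fun h => ha ((mem_powersetCard.1 hS).1 h)

theorem sq_sum_eq_sum_sq_add_two_mul_esymm_two (s : Finset α) :
    (∑ i ∈ s, f i) ^ 2 = ∑ i ∈ s, f i ^ 2 + 2 * ∑ S ∈ s.powersetCard 2, ∏ i ∈ S, f i := by
  induction s using Finset.induction with
  | empty => simp [powersetCard_succ_empty]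
  | @insert a s ha ih =>
    rw [sum_insert ha, sum_insert ha, esymm_succ_insert f ha 1, esymm_one]
    linear_combination ih

theorem sum_prod_mul_sum_powersetCard (s : Finset α) (k : ℕ) :
    ∑ S ∈ s.powersetCard k, (∏ i ∈ S, f i) * ∑ i ∈ S, f i =
      (∑ i ∈ s, f i) * ∑ S ∈ s.powersetCard k, ∏ i ∈ S, f i -
        (k + 1) * ∑ S ∈ s.powersetCard (k + 1), ∏ i ∈ S, f i := by
  induction s using Finset.induction generalizing k with
  | empty => cases k <;> simp [powersetCard_succ_empty]
  | @insert a s ha ih =>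
    cases k with
    | zero => simp [esymm_one]
    | succ k =>
      have hS : ∀ S ∈ s.powersetCard k, a ∉ S := fun S hS h => ha ((mem_powersetCard.1 hS).1 h)
      have hinsert : ∑ S ∈ s.powersetCard k, (∏ i ∈ insert a S, f i) * ∑ i ∈ insert a S, f i =
          f a ^ 2 * ∑ S ∈ s.powersetCard k, ∏ i ∈ S, f i +
            f a * ∑ S ∈ s.powersetCard k, (∏ i ∈ S, f i) * ∑ i ∈ S, f i := by
        rw [mul_sum, mul_sum, ← sum_add_distrib]
        refine sum_congr rfl fun S hS' => ?_
        rw [prod_insert (hS S hS'), sum_insert (hS S hS')]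
        ring
      rw [sum_powersetCard_succ_insert ha, hinsert, esymm_succ_insert f ha, esymm_succ_insert f ha,
        sum_insert ha, ih (k + 1), ih k]
      push_cast
      ring

theorem esymm_two_sq (s : Finset α) :
    ∑ S ∈ s.powersetCard 2, (∏ i ∈ S, f i) ^ 2 =
      (∑ S ∈ s.powersetCard 2, ∏ i ∈ S, f i) ^ 2 -
        2 * (∑ i ∈ s, f i) * ∑ S ∈ s.powersetCard 3, ∏ i ∈ S, f i +
          2 * ∑ S ∈ s.powersetCard 4, ∏ i ∈ S, f i := by
  induction s using Finset.induction with
  | empty => simp [powersetCard_succ_empty]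
  | @insert a s ha ih =>
    simp only [← prod_pow] at ih ⊢
    rw [esymm_succ_insert (f · ^ 2) ha 1, esymm_one (f · ^ 2), esymm_succ_insert f ha 1,
      esymm_succ_insert f ha 2, esymm_succ_insert f ha 3, esymm_one, sum_insert ha]
    linear_combination ih - f a ^ 2 * sq_sum_eq_sum_sq_add_two_mul_esymm_two f s

theorem sq_esymm_two_sub_sum_sq (s : Finset α) :
    (∑ S ∈ s.powersetCard 2, ∏ i ∈ S, f i) ^ 2 - ∑ S ∈ s.powersetCard 2, (∏ i ∈ S, f i) ^ 2 =
      2 * ∑ S ∈ s.powersetCard 3, (∏ i ∈ S, f i) * ∑ i ∈ S, f i +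
        6 * ∑ S ∈ s.powersetCard 4, ∏ i ∈ S, f i := by
  rw [esymm_two_sq, sum_prod_mul_sum_powersetCard f s 3]
  push_cast
  ring

end Finset

/-- The elementary symmetric-function identities used in the computation of the diagonal
of the correction matrix. Sums over strictly increasing tuples of indices are written as
sums over subsets of the corresponding cardinality; note
`∑_{i<j<k} (c_i²c_jc_k + c_ic_j²c_k + c_ic_jc_k²) = ∑_{|S|=3} (∏_{i∈S} c_i)(∑_{i∈S} c_i)`.
First identity: indices range over `{1,…,n-1}`; second identity: if moreover
`c 0 = -∑_{i≠0} c i`, indices range over `{0,…,n-1}`. -/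
theorem symmetric_identity (n : ℕ) [NeZero n] (c : Fin n → ℝ) :
    ((∑ S ∈ (univ.erase (0 : Fin n)).powersetCard 2, ∏ i ∈ S, c i) ^ 2 -
        ∑ S ∈ (univ.erase (0 : Fin n)).powersetCard 2, (∏ i ∈ S, c i) ^ 2 =
      2 * ∑ S ∈ (univ.erase (0 : Fin n)).powersetCard 3,
          (∏ i ∈ S, c i) * (∑ i ∈ S, c i) +
        6 * ∑ S ∈ (univ.erase (0 : Fin n)).powersetCard 4, ∏ i ∈ S, c i) ∧
    (c 0 = -∑ i ∈ univ.erase (0 : Fin n), c i →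
      (∑ S ∈ (univ : Finset (Fin n)).powersetCard 2, ∏ i ∈ S, c i) ^ 2 -
          ∑ S ∈ (univ : Finset (Fin n)).powersetCard 2, (∏ i ∈ S, c i) ^ 2 =
        -2 * ∑ S ∈ (univ : Finset (Fin n)).powersetCard 4, ∏ i ∈ S, c i) := by
  refine ⟨sq_esymm_two_sub_sum_sq c _, fun h0 => ?_⟩
  have hsum : ∑ i, c i = 0 := by
    rw [← add_sum_erase _ _ (mem_univ 0), h0]
    ring
  rw [esymm_two_sq, hsum]
  ring
end

section
/- Let f : V → ℝ be an eigenfunction of the negative random walk generator -L^{RW} with eigenvalue λ, and for 1 ≤ k ≤ n-1 define g on k-element subsets ζ ⊆ V by g(ζ) = ∑_{x∈ζ} f(x). If f is not constant, then g is a nonzero eigenfunction of the negative k-particle symmetric exclusion generator -L^{EP} with the same eigenvalue λ; hence Spec(-L^{RW}) ⊆ Spec(-L^{EP}). -/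
open Finset Equiv

variable {n : ℕ}

/-- Exclusion process generator on subsets: `L^{EP} g(ζ) = ∑_{x<y} c_{xy}(g(ζ^{xy}) - g(ζ))`,
where `ζ^{xy}` exchanges the occupation of `x` and `y` (image of `ζ` under the swap). -/
def epGen (c : Fin n → Fin n → ℝ) (g : Finset (Fin n) → ℝ) (ζ : Finset (Fin n)) : ℝ :=
  ∑ x : Fin n, ∑ y ∈ univ.filter (fun y => x < y),
    c x y * (g (ζ.image (Equiv.swap x y)) - g ζ)

/-! A linear statistic `g(ζ) = ∑_{x∈ζ} f(x)` changes under the transposition of `x` and `y` only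
when exactly one of them is occupied, and then by `±(f y - f x)`. Summing over edges, each
occupied site `x` collects `∑_{y≠x} c_{xy}(f y - f x)` (the terms with both ends occupied cancel by
symmetry of `c`), so `L^{EP} g(ζ) = ∑_{x∈ζ} L^{RW} f(x) = -λ g(ζ)`. Nonvanishing: if `f a ≠ f b`,
then for a `(k-1)`-set `T` avoiding `a` and `b`, the sums over `T ∪ {a}` and `T ∪ {b}` differ. -/

theorem Finset.sum_image_swap_sub_sum {α M : Type*} [DecidableEq α] [AddCommGroup M]
    (s : Finset α) (f : α → M) {x y : α} (hxy : x ≠ y) :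
    ∑ z ∈ s.image (swap x y), f z - ∑ z ∈ s, f z
      = (if x ∈ s then f y - f x else 0) + (if y ∈ s then f x - f y else 0) := by
  have hpoint : ∀ z, f (swap x y z) - f z
      = (if z = x then f y - f x else 0) + (if z = y then f x - f y else 0) := by
    intro z
    rcases eq_or_ne z x with rfl | hzx
    · simp [hxy]
    rcases eq_or_ne z y with rfl | hzy
    · simp [hzx]
    · simp [swap_apply_of_ne_of_ne hzx hzy, hzx, hzy]
  rw [sum_image (swap x y).injective.injOn, ← sum_sub_distrib, sum_congr rfl fun z _ => hpoint z,
    sum_add_distrib, sum_ite_eq' s x, sum_ite_eq' s y]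

theorem Finset.sum_sum_lt_add_swap {α M : Type*} [Fintype α] [LinearOrder α] [AddCommMonoid M]
    (h : α → α → M) :
    ∑ x, ∑ y ∈ univ.filter (x < ·), (h x y + h y x) = ∑ x, ∑ y ∈ univ.erase x, h x y := by
  have hswap : ∑ x, ∑ y ∈ univ.filter (x < ·), h y x = ∑ x, ∑ y ∈ univ.filter (· < x), h x y :=
    sum_comm' fun _ _ => by simp
  have hsplit : ∀ x : α, univ.erase x = univ.filter (x < ·) ∪ univ.filter (· < x) := by
    intro x
    ext y
    simp only [mem_erase, mem_union, mem_filter, mem_univ, and_true, true_and]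
    exact ne_comm.trans lt_or_lt_iff_ne.symm
  have hdisj : ∀ x : α, Disjoint (univ.filter (x < ·)) (univ.filter (· < x)) := by
    intro x
    exact disjoint_filter.mpr fun y _ hxy hyx => lt_asymm hxy hyx
  simp only [sum_add_distrib, hswap]
  rw [← sum_add_distrib]
  exact sum_congr rfl fun x _ => by rw [hsplit x, sum_union (hdisj x)]

theorem Finset.exists_card_eq_sum_ne_zero {α M : Type*} [Fintype α] [DecidableEq α]
    [AddCommGroup M] {f : α → M} {a b : α} (hab : f a ≠ f b) {k : ℕ} (hk1 : 1 ≤ k)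
    (hk : k < Fintype.card α) :
    ∃ s : Finset α, s.card = k ∧ ∑ x ∈ s, f x ≠ 0 := by
  have hne : a ≠ b := fun h => hab (congrArg f h)
  obtain ⟨T, hT, hTcard⟩ : ∃ T ⊆ univ \ {a, b}, T.card = k - 1 := by
    apply exists_subset_card_eq
    rw [card_sdiff_of_subset (subset_univ _), card_univ, card_pair hne]
    omega
  have haT : a ∉ T := fun h => by simpa using hT h
  have hbT : b ∉ T := fun h => by simpa using hT h
  by_cases ha : ∑ x ∈ insert a T, f x = 0
  · refine ⟨insert b T, by rw [card_insert_of_notMem hbT]; omega, fun hb => hab ?_⟩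
    rw [sum_insert haT] at ha
    rw [sum_insert hbT] at hb
    exact add_right_cancel (ha.trans hb.symm)
  · exact ⟨insert a T, by rw [card_insert_of_notMem haT]; omega, ha⟩

theorem epGen_sum_eq (c : Fin n → Fin n → ℝ) (hsymm : ∀ x y, c x y = c y x)
    (f : Fin n → ℝ) (ζ : Finset (Fin n)) :
    epGen c (fun ζ' => ∑ x ∈ ζ', f x) ζ = ∑ x ∈ ζ, ∑ y ∈ univ.erase x, c x y * (f y - f x) := by
  let U : Fin n → Fin n → ℝ := fun x y => if x ∈ ζ then c x y * (f y - f x) else 0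
  have hedge : ∀ x y, x ≠ y →
      c x y * (∑ z ∈ ζ.image (swap x y), f z - ∑ z ∈ ζ, f z) = U x y + U y x := by
    intro x y hxy
    rw [sum_image_swap_sub_sum ζ f hxy]
    simp only [U]
    rw [hsymm y x]
    split_ifs <;> ring
  calc epGen c (fun ζ' => ∑ x ∈ ζ', f x) ζ
      = ∑ x, ∑ y ∈ univ.filter (x < ·), (U x y + U y x) :=
        sum_congr rfl fun x _ => sum_congr rfl fun y hy => hedge x y (mem_filter.mp hy).2.ne
    _ = ∑ x, ∑ y ∈ univ.erase x, U x y := sum_sum_lt_add_swap U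
    _ = ∑ x ∈ ζ, ∑ y ∈ univ.erase x, c x y * (f y - f x) := by
        simp only [U, sum_ite_irrel, sum_const_zero, sum_ite_mem, univ_inter]

theorem rw_eigenfunction_to_exclusion_general (c : Fin n → Fin n → ℝ)
    (hsymm : ∀ x y, c x y = c y x)
    (k : ℕ) (hk1 : 1 ≤ k) (hkn : k ≤ n - 1)
    (lam : ℝ) (f : Fin n → ℝ)
    (heig : ∀ x, -(∑ y ∈ univ.erase x, c x y * (f y - f x)) = lam * f x)
    (hnc : ¬(∃ a : ℝ, ∀ x, f x = a)) :
    (∃ ζ : Finset (Fin n), ζ.card = k ∧ ∑ x ∈ ζ, f x ≠ 0) ∧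
    (∀ ζ : Finset (Fin n), ζ.card = k →
      -(epGen c (fun ζ' => ∑ x ∈ ζ', f x) ζ) = lam * ∑ x ∈ ζ, f x) := by
  obtain ⟨a, b, hab⟩ : ∃ a b, f a ≠ f b := by
    by_contra! hconst
    exact hnc ⟨f ⟨0, by omega⟩, fun x => hconst x _⟩
  refine ⟨exists_card_eq_sum_ne_zero hab hk1 (by rw [Fintype.card_fin]; omega), fun ζ _ => ?_⟩
  rw [epGen_sum_eq c hsymm, mul_sum, ← sum_neg_distrib]
  exact sum_congr rfl fun x _ => heig x

/-- If `f` is a nonconstant eigenfunction of the negative random walk generator with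
eigenvalue `lam`, then `g(ζ) = ∑_{x∈ζ} f(x)` is a nonzero eigenfunction (on `k`-element
subsets) of the negative `k`-particle exclusion generator with the same eigenvalue;
hence `Spec(-L^{RW}) ⊆ Spec(-L^{EP})`. -/
theorem rw_eigenfunction_to_exclusion (c : Fin n → Fin n → ℝ)
    (hsymm : ∀ x y, c x y = c y x) (hnonneg : ∀ x y, 0 ≤ c x y)
    (k : ℕ) (hk1 : 1 ≤ k) (hkn : k ≤ n - 1)
    (lam : ℝ) (f : Fin n → ℝ)
    (heig : ∀ x, -(∑ y ∈ univ.erase x, c x y * (f y - f x)) = lam * f x)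
    (hnc : ¬(∃ a : ℝ, ∀ x, f x = a)) :
    (∃ ζ : Finset (Fin n), ζ.card = k ∧ ∑ x ∈ ζ, f x ≠ 0) ∧
    (∀ ζ : Finset (Fin n), ζ.card = k →
      -(epGen c (fun ζ' => ∑ x ∈ ζ', f x) ζ) = lam * ∑ x ∈ ζ, f x) :=
  rw_eigenfunction_to_exclusion_general c hsymm k hk1 hkn lam f heig hnc
end
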